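/- Let N = (V, A, c) be a network, x, y, z ∈ V with y ≠ z, and f a maximum flow from y to z in N. Then f(x) ≥ λ^N_{yz}(x). -/

import Mathlib

/-!
Networks on the complete digraph: capacities `c : V → V → ℕ` with no loops
(arcs are ordered pairs of distinct vertices; loops are given capacity 0).
-/

structure Network (V : Type*) where
  c : V → V → ℕ
  no_loop : ∀ v, c v v = 0

namespace NetFlow

variable {V : Type*} [Fintype V] [DecidableEq V]

/-- `f` is a flow from `y` to `z` in `N`. -/
def IsFlow (N : Network V) (y z : V) (f : V → V → ℕ) : Prop :=
  (∀ u v, f u v ≤ N.c u v) ∧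
  (∀ x, x ≠ y → x ≠ z → ∑ u, f u x = ∑ u, f x u)

/-- The value of a flow from `y`. -/
def flowValue (f : V → V → ℕ) (y : V) : ℤ :=
  (∑ u, (f y u : ℤ)) - ∑ u, (f u y : ℤ)

/-- The maximum flow value `φ^N_{yz}`. -/
noncomputable def maxFlowValue (N : Network V) (y z : V) : ℕ :=
  sSup {m : ℕ | ∃ f, IsFlow N y z f ∧ flowValue f y = (m : ℤ)}

/-- `f` is a maximum flow from `y` to `z` in `N`. -/
def IsMaxFlow (N : Network V) (y z : V) (f : V → V → ℕ) : Prop :=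
  IsFlow N y z f ∧ flowValue f y = (maxFlowValue N y z : ℤ)

/-- The network `N_X`: capacities of arcs incident to `X` are set to zero. -/
def removeVerts (N : Network V) (X : Finset V) : Network V where
  c u v := if u ∈ X ∨ v ∈ X then 0 else N.c u v
  no_loop v := by simp [N.no_loop v]

/-- `φ^N_{yz}(X) = φ^N_{yz} - φ^{N_X}_{yz}`. -/
noncomputable def phiDrop (N : Network V) (y z : V) (X : Finset V) : ℤ :=
  (maxFlowValue N y z : ℤ) - (maxFlowValue (removeVerts N X) y z : ℤ)

/-- The (consecutive) arcs of a list of vertices. -/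
def pathArcs (p : List V) : List (V × V) := p.zip p.tail

/-- `p` is a path from `y` to `z` in `N`: at least two distinct vertices, starting at `y`,
ending at `z`, with all consecutive arcs of positive capacity. -/
def IsPath (N : Network V) (y z : V) (p : List V) : Prop :=
  2 ≤ p.length ∧ p.Nodup ∧ p.head? = some y ∧ p.getLast? = some z ∧
    p.Chain' fun u v => 1 ≤ N.c u v

/-- `p` is a cycle in `N`. -/
def IsCycle (N : Network V) (p : List V) : Prop :=
  3 ≤ p.length ∧ p.dropLast.Nodup ∧ p.head? = p.getLast? ∧
    p.Chain' fun u v => 1 ≤ N.c u v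

/-- A sequence of arc-disjoint paths from `y` to `z` in `N`: each component is a path, and
each arc `a` is used by at most `c a` components. -/
def IsPathSeq (N : Network V) (y z : V) (γ : List (List V)) : Prop :=
  (∀ p ∈ γ, IsPath N y z p) ∧
  ∀ u v : V, γ.countP (fun p => decide ((u, v) ∈ pathArcs p)) ≤ N.c u v

/-- `λ^N_{yz}`: the maximum length of a sequence of arc-disjoint paths from `y` to `z`. -/
noncomputable def maxSeqLen (N : Network V) (y z : V) : ℕ :=
  sSup {m : ℕ | ∃ γ : List (List V), IsPathSeq N y z γ ∧ γ.length = m}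

/-- `M^N_{yz}`: the sequences of arc-disjoint paths from `y` to `z` of maximum length. -/
def MaxSeqs (N : Network V) (y z : V) : Set (List (List V)) :=
  {γ | IsPathSeq N y z γ ∧ γ.length = maxSeqLen N y z}

/-- `l_X(γ)`: the number of components of `γ` having a vertex in `X`. -/
def lX (X : Finset V) (γ : List (List V)) : ℕ :=
  γ.countP fun p => p.any fun x => decide (x ∈ X)

/-- `λ^N_{yz}(X)`: the minimum of `l_X` over maximum-length sequences of arc-disjoint paths. -/
noncomputable def lambdaX (N : Network V) (y z : V) (X : Finset V) : ℕ :=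
  sInf {n : ℕ | ∃ γ ∈ MaxSeqs N y z, lX X γ = n}

/-- The flow through a vertex: `f(x) = Σ_{a exiting x} f(a)` if `x ∉ {y,z}`, `v(f)` otherwise. -/
def vertexFlow (f : V → V → ℕ) (y z x : V) : ℤ :=
  if x = y ∨ x = z then flowValue f y else ∑ u, (f x u : ℤ)

/-- `δ^N_{yz}(X)`: the minimum of `f(X) = Σ_{x∈X} f(x)` over maximum flows `f`. -/
noncomputable def deltaX (N : Network V) (y z : V) (X : Finset V) : ℕ :=
  sInf {n : ℕ | ∃ f, IsMaxFlow N y z f ∧ (∑ x ∈ X, vertexFlow f y z x) = (n : ℤ)}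

/-- The flow `f_γ` associated with a sequence of arc-disjoint paths. -/
def seqFlow (γ : List (List V)) (u v : V) : ℕ :=
  γ.countP fun p => decide ((u, v) ∈ pathArcs p)

/-- The path (or cycle) function `χ_p` of a path or cycle `p`. -/
def chi (p : List V) (u v : V) : ℕ := (pathArcs p).count (u, v)

/-- `(γ, w)` is a decomposition of the flow `f`: `γ` is a sequence of `v(f)` paths from `y`
to `z`, `w` a sequence of cycles, and `f = Σ_j χ_{γ_j} + Σ_j χ_{w_j}`. -/
def IsDecomposition (N : Network V) (y z : V) (f : V → V → ℕ)
    (γ w : List (List V)) : Prop :=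
  (∀ p ∈ γ, IsPath N y z p) ∧ (∀ q ∈ w, IsCycle N q) ∧
  (γ.length : ℤ) = flowValue f y ∧
  ∀ u v : V, f u v = (γ.map fun p => chi p u v).sum + (w.map fun q => chi q u v).sum

/-- The forward arcs of a generalized path given by vertices `p` and directions `d`. -/
def forwardArcs (p : List V) (d : List Bool) : List (V × V) :=
  ((p.zip p.tail).zip d).filterMap fun e => if e.2 then some e.1 else none

/-- The backward arcs of a generalized path given by vertices `p` and directions `d`. -/
def backwardArcs (p : List V) (d : List Bool) : List (V × V) :=
  ((p.zip p.tail).zip d).filterMap fun e => if e.2 then none else some (e.1.2, e.1.1)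

/-- `(p, d)` is a generalized path from `y` to `z`: distinct vertices `x_1 = y, …, x_m = z`
(`m ≥ 2`), the `i`-th arc being `(x_i, x_{i+1})` (forward, `d_i = true`) or `(x_{i+1}, x_i)`
(backward, `d_i = false`). -/
def IsGenPath (y z : V) (p : List V) (d : List Bool) : Prop :=
  2 ≤ p.length ∧ p.Nodup ∧ p.head? = some y ∧ p.getLast? = some z ∧
    d.length + 1 = p.length

/-- `(p, d)` is an augmenting path for `f` from `y` to `z` in `N`. -/
def IsAugPath (N : Network V) (y z : V) (f : V → V → ℕ)
    (p : List V) (d : List Bool) : Prop :=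
  IsGenPath y z p d ∧
  (∀ a ∈ forwardArcs p d, f a.1 a.2 < N.c a.1 a.2) ∧
  (∀ a ∈ backwardArcs p d, 1 ≤ f a.1 a.2)

/-- `χ_σ` for a generalized path `σ = (p, d)`: `+1` on forward arcs, `-1` on backward arcs. -/
def chiGen (p : List V) (d : List Bool) (u v : V) : ℤ :=
  ((forwardArcs p d).count (u, v) : ℤ) - ((backwardArcs p d).count (u, v) : ℤ)

/-- The full flow vitality group centrality measure `φ^N(X)`. -/
noncomputable def phiGC (N : Network V) (X : Finset V) : ℝ :=
  ∑ a ∈ Finset.univ.filter (fun a : V × V => a.1 ≠ a.2 ∧ 0 < maxFlowValue N a.1 a.2),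
    (phiDrop N a.1 a.2 X : ℝ) / (maxFlowValue N a.1 a.2 : ℝ)

/-- The full flow betweenness group centrality measure `λ^N(X)`. -/
noncomputable def lambdaGC (N : Network V) (X : Finset V) : ℝ :=
  ∑ a ∈ Finset.univ.filter (fun a : V × V => a.1 ≠ a.2 ∧ 0 < maxFlowValue N a.1 a.2),
    (lambdaX N a.1 a.2 X : ℝ) / (maxFlowValue N a.1 a.2 : ℝ)

end NetFlow

/-!
A maximum flow `f` of value `φ` splits into `φ` paths from `y` to `z` whose path functions sum to
at most `f`: while the value is positive, a cut argument yields a path along arcs carrying flow,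
and removing it lowers the value by one. These paths are arc-disjoint, and conversely every
arc-disjoint sequence of paths is a flow of value its length, so `λ_{yz} = φ_{yz}` and the
sequence lies in `M_{yz}`. If `x ∉ {y, z}`, every path through `x` leaves `x` along its own unit
of `f`, whence `λ_{yz}(x) ≤ l_x ≤ f(x)`; otherwise `l_x ≤ φ = v(f)`.
-/

namespace List

variable {α β : Type*}

theorem map_fst_zip_tail : ∀ l : List α, (l.zip l.tail).map Prod.fst = l.dropLast
  | [] | [_] => rfl
  | a :: b :: l => by simpa using map_fst_zip_tail (b :: l)

theorem map_snd_zip_tail (l : List α) : (l.zip l.tail).map Prod.snd = l.tail :=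
  map_snd_zip (by simp)

theorem sum_count_pair_left [Fintype α] [DecidableEq α] [DecidableEq β]
    (l : List (α × β)) (b : β) : ∑ a, l.count (a, b) = (l.map Prod.snd).count b := by
  induction l with
  | nil => simp
  | cons p l ih =>
    obtain ⟨a', b'⟩ := p
    by_cases h : b' = b <;> simp [count_cons, Finset.sum_add_distrib, ih, h]

theorem sum_count_pair_right [Fintype β] [DecidableEq α] [DecidableEq β]
    (l : List (α × β)) (a : α) : ∑ b, l.count (a, b) = (l.map Prod.fst).count a := by
  induction l with
  | nil => simp
  | cons p l ih =>
    obtain ⟨a', b'⟩ := p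
    by_cases h : a' = a <;> simp [count_cons, Finset.sum_add_distrib, ih, h]

theorem Nodup.mem_tail_iff {l : List α} {a b : α} (hl : l.Nodup) (ha : l.head? = some a) :
    b ∈ l.tail ↔ b ∈ l ∧ b ≠ a := by
  obtain ⟨t, rfl⟩ := head?_eq_some_iff.1 ha
  have := (nodup_cons.1 hl).1
  grind

theorem Nodup.mem_dropLast_iff {l : List α} {a b : α} (hl : l.Nodup)
    (ha : l.getLast? = some a) : b ∈ l.dropLast ↔ b ∈ l ∧ b ≠ a := by
  rw [← dropLast_append_getLast? a ha] at hl ⊢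
  have := nodup_append.1 hl
  grind

theorem IsChain.rel_of_mem_zip_tail {r : α → α → Prop} :
    ∀ {l : List α}, l.IsChain r → ∀ {a b : α}, (a, b) ∈ l.zip l.tail → r a b
  | [], _, _, _, h | [_], _, _, _, h => by simp at h
  | c :: d :: l, hl, a, b, h => by
    rw [isChain_cons_cons] at hl
    rcases mem_cons.1 h with h | h
    · simp only [Prod.mk.injEq] at h
      exact h.1 ▸ h.2 ▸ hl.1
    · exact hl.2.rel_of_mem_zip_tail h

theorem exists_nodup_isChain_of_reflTransGen {r : α → α → Prop} {a b : α}
    (h : Relation.ReflTransGen r a b) :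
    ∃ l : List α, l.IsChain r ∧ l.head? = some a ∧ l.getLast? = some b ∧ l.Nodup := by
  induction h using Relation.ReflTransGen.head_induction_on with
  | refl => exact ⟨[b], by simp⟩
  | @head a c hac _ ih =>
    obtain ⟨l, hl, hc, hb, hnd⟩ := ih
    by_cases ha : a ∈ l
    · obtain ⟨s, t, rfl⟩ := append_of_mem ha
      refine ⟨a :: t, hl.suffix (suffix_append s _), rfl, ?_,
        hnd.sublist (sublist_append_right s _)⟩
      rwa [getLast?_append_of_ne_nil _ (cons_ne_nil a t)] at hb
    · obtain ⟨t, rfl⟩ := head?_eq_some_iff.1 hc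
      exact ⟨a :: c :: t, hl.cons_cons hac, rfl, by simpa using hb, nodup_cons.2 ⟨ha, hnd⟩⟩

end List

namespace NetFlow

variable {V : Type*} {N : Network V} {y z : V}

theorem pathArcs_nodup {p : List V} (hp : p.Nodup) : (pathArcs p).Nodup :=
  List.Nodup.of_map Prod.fst <| by
    rw [pathArcs, List.map_fst_zip_tail]
    exact hp.sublist (List.dropLast_sublist p)

theorem IsPath.head_mem {p : List V} (hp : IsPath N y z p) : y ∈ p :=
  List.mem_of_mem_head? hp.2.2.1

section Flows

variable [Fintype V]

theorem flowValue_eq_add {f g h : V → V → ℕ} (hgh : ∀ u v, g u v + h u v = f u v) (y : V) :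
    flowValue f y = flowValue g y + flowValue h y := by
  simp only [flowValue, ← hgh, Nat.cast_add, Finset.sum_add_distrib]
  ring

theorem IsFlow.of_add {f g h : V → V → ℕ} (hf : IsFlow N y z f) (hh : IsFlow N y z h)
    (hgh : ∀ u v, g u v + h u v = f u v) : IsFlow N y z g := by
  refine ⟨fun u v => (Nat.le.intro (hgh u v)).trans (hf.1 u v), fun x hy hz => ?_⟩
  have hfx := hf.2 x hy hz
  have hhx := hh.2 x hy hz
  simp only [← hgh, Finset.sum_add_distrib] at hfx
  omega

theorem flowValue_le_sum_capacity {f : V → V → ℕ} (hf : IsFlow N y z f) :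
    flowValue f y ≤ ∑ u, (N.c y u : ℤ) := by
  have hin : 0 ≤ ∑ u, (f u y : ℤ) := by positivity
  have hout : ∑ u, (f y u : ℤ) ≤ ∑ u, (N.c y u : ℤ) :=
    Finset.sum_le_sum fun u _ => by exact_mod_cast hf.1 y u
  rw [flowValue]
  omega

theorem bddAbove_flowValues :
    BddAbove {m : ℕ | ∃ f, IsFlow N y z f ∧ flowValue f y = (m : ℤ)} :=
  ⟨∑ u, N.c y u, fun m ⟨_, hf, hm⟩ => by exact_mod_cast hm ▸ flowValue_le_sum_capacity hf⟩

end Flows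

section PathSequences

variable [DecidableEq V]

theorem seqFlow_cons (p : List V) (γ : List (List V)) (u v : V) :
    seqFlow (p :: γ) u v = seqFlow γ u v + if (u, v) ∈ pathArcs p then 1 else 0 := by
  simp [seqFlow, List.countP_cons]

theorem seqFlow_singleton (p : List V) (u v : V) :
    seqFlow [p] u v = if (u, v) ∈ pathArcs p then 1 else 0 := by
  simp [seqFlow]

variable [Fintype V]

theorem IsPath.sum_arcs_out {p : List V} (hp : IsPath N y z p) (x : V) :
    ∑ u, (if (x, u) ∈ pathArcs p then 1 else 0) = if x ∈ p ∧ x ≠ z then 1 else 0 := by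
  obtain ⟨-, hnd, -, hz, -⟩ := hp
  simp_rw [← (pathArcs_nodup hnd).count]
  rw [List.sum_count_pair_right, pathArcs, List.map_fst_zip_tail,
    (hnd.sublist (List.dropLast_sublist p)).count]
  simp only [hnd.mem_dropLast_iff hz]

theorem IsPath.sum_arcs_in {p : List V} (hp : IsPath N y z p) (x : V) :
    ∑ u, (if (u, x) ∈ pathArcs p then 1 else 0) = if x ∈ p ∧ x ≠ y then 1 else 0 := by
  obtain ⟨-, hnd, hy, -, -⟩ := hp
  simp_rw [← (pathArcs_nodup hnd).count]
  rw [List.sum_count_pair_left, pathArcs, List.map_snd_zip_tail,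
    (hnd.sublist (List.tail_sublist p)).count]
  simp only [hnd.mem_tail_iff hy]

theorem sum_seqFlow_out {γ : List (List V)} (hγ : ∀ p ∈ γ, IsPath N y z p) (x : V) :
    ∑ u, seqFlow γ x u = γ.countP fun p => x ∈ p ∧ x ≠ z := by
  induction γ with
  | nil => simp [seqFlow]
  | cons p γ ih =>
    simp only [seqFlow_cons, Finset.sum_add_distrib, List.forall_mem_cons] at hγ ⊢
    rw [ih hγ.2, hγ.1.sum_arcs_out, List.countP_cons]
    simp

theorem sum_seqFlow_in {γ : List (List V)} (hγ : ∀ p ∈ γ, IsPath N y z p) (x : V) :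
    ∑ u, seqFlow γ u x = γ.countP fun p => x ∈ p ∧ x ≠ y := by
  induction γ with
  | nil => simp [seqFlow]
  | cons p γ ih =>
    simp only [seqFlow_cons, Finset.sum_add_distrib, List.forall_mem_cons] at hγ ⊢
    rw [ih hγ.2, hγ.1.sum_arcs_in, List.countP_cons]
    simp

theorem isFlow_seqFlow {γ : List (List V)} (hγ : IsPathSeq N y z γ) :
    IsFlow N y z (seqFlow γ) :=
  ⟨hγ.2, fun x hy hz => by simp [sum_seqFlow_in hγ.1, sum_seqFlow_out hγ.1, hy, hz]⟩

theorem flowValue_seqFlow (hyz : y ≠ z) {γ : List (List V)}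
    (hγ : ∀ p ∈ γ, IsPath N y z p) : flowValue (seqFlow γ) y = γ.length := by
  have hout : ∑ u, seqFlow γ y u = γ.length := by
    rw [sum_seqFlow_out hγ, List.countP_eq_length]
    exact fun p hp => by simpa [hyz] using (hγ p hp).head_mem
  simp [flowValue, ← Nat.cast_sum, hout, sum_seqFlow_in hγ]

theorem sum_outflow_sub_inflow_eq_cut (S : Finset V) (g : V → V → ℤ) :
    ∑ u ∈ S, (∑ v, g u v - ∑ v, g v u) =
      ∑ u ∈ S, ∑ v ∈ Sᶜ, g u v - ∑ u ∈ S, ∑ v ∈ Sᶜ, g v u := by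
  simp only [← Finset.sum_add_sum_compl S, Finset.sum_sub_distrib, Finset.sum_add_distrib]
  rw [Finset.sum_comm (s := S) (t := S) (f := fun u v => g v u)]
  ring

/-- The vertices reachable from `y` along arcs carrying flow would otherwise form a cut that no
flow leaves, so their total net outflow `v(f)` could not be positive. -/
theorem reflTransGen_of_flowValue_pos {f : V → V → ℕ} (hf : IsFlow N y z f)
    (hv : 0 < flowValue f y) : Relation.ReflTransGen (fun u v => 0 < f u v) y z := by
  classical
  by_contra hz
  set S := Finset.univ.filter (Relation.ReflTransGen (fun u v => 0 < f u v) y)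
  have hyS : y ∈ S := by simp [S, Relation.ReflTransGen.refl]
  have hzS : z ∉ S := by simpa [S] using hz
  have hnet : ∑ u ∈ S, (∑ v, (f u v : ℤ) - ∑ v, (f v u : ℤ)) = flowValue f y := by
    refine (Finset.sum_eq_single_of_mem y hyS fun u hu huy => ?_).trans rfl
    have := hf.2 u huy (ne_of_mem_of_not_mem hu hzS)
    rw [sub_eq_zero]
    exact_mod_cast this.symm
  have hout : ∑ u ∈ S, ∑ v ∈ Sᶜ, (f u v : ℤ) = 0 := by
    refine Finset.sum_eq_zero fun u hu => Finset.sum_eq_zero fun v hv => ?_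
    by_contra hne
    have hpos : 0 < f u v := by omega
    simp only [S, Finset.mem_compl, Finset.mem_filter, Finset.mem_univ, true_and] at hu hv
    exact hv (hu.tail hpos)
  have hin : 0 ≤ ∑ u ∈ S, ∑ v ∈ Sᶜ, (f v u : ℤ) := by positivity
  rw [sum_outflow_sub_inflow_eq_cut, hout] at hnet
  omega

theorem exists_isPath_le_of_flowValue_pos (hyz : y ≠ z) {f : V → V → ℕ}
    (hf : IsFlow N y z f) (hv : 0 < flowValue f y) :
    ∃ p, IsPath N y z p ∧ ∀ u v, seqFlow [p] u v ≤ f u v := by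
  obtain ⟨p, hchain, hy, hz, hnd⟩ :=
    List.exists_nodup_isChain_of_reflTransGen (reflTransGen_of_flowValue_pos hf hv)
  have hlen : 2 ≤ p.length := by
    match p, hy, hz with
    | [_], hy, hz => simp_all
    | _ :: _ :: _, _, _ => simp
  refine ⟨p, ⟨hlen, hnd, hy, hz, hchain.imp fun _ _ h => h.trans_le (hf.1 _ _)⟩,
    fun u v => ?_⟩
  by_cases h : (u, v) ∈ pathArcs p
  · simpa [seqFlow, h, Nat.one_le_iff_ne_zero, Nat.pos_iff_ne_zero] using
      hchain.rel_of_mem_zip_tail h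
  · simp [seqFlow, h]

theorem exists_paths_le_of_isFlow (hyz : y ≠ z) :
    ∀ (n : ℕ) {f : V → V → ℕ}, IsFlow N y z f → flowValue f y = n →
      ∃ γ : List (List V), (∀ p ∈ γ, IsPath N y z p) ∧ γ.length = n ∧
        ∀ u v, seqFlow γ u v ≤ f u v
  | 0, _, _, _ => ⟨[], by simp, rfl, fun u v => by simp [seqFlow]⟩
  | n + 1, f, hf, hv => by
    obtain ⟨p, hp, hpf⟩ := exists_isPath_le_of_flowValue_pos hyz hf (by omega)
    have hp' : ∀ q ∈ [p], IsPath N y z q := List.forall_mem_singleton.2 hp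
    have hsplit : ∀ u v, (f u v - seqFlow [p] u v) + seqFlow [p] u v = f u v :=
      fun u v => Nat.sub_add_cancel (hpf u v)
    have hpflow : IsFlow N y z (seqFlow [p]) :=
      isFlow_seqFlow ⟨hp', fun u v => (hpf u v).trans (hf.1 u v)⟩
    have hvrest : flowValue (fun u v => f u v - seqFlow [p] u v) y = n := by
      have := flowValue_eq_add hsplit y
      rw [flowValue_seqFlow hyz hp', hv, List.length_singleton] at this
      push_cast at this
      omega
    obtain ⟨γ, hγ, hlen, hγf⟩ :=
      exists_paths_le_of_isFlow hyz n (hf.of_add hpflow hsplit) hvrest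
    refine ⟨p :: γ, List.forall_mem_cons.2 ⟨hp, hγ⟩, by simp [hlen], fun u v => ?_⟩
    have := hγf u v
    have := hsplit u v
    rw [seqFlow_cons, ← seqFlow_singleton]
    omega

theorem maxSeqLen_eq_maxFlowValue (hyz : y ≠ z) : maxSeqLen N y z = maxFlowValue N y z := by
  have hflows_ne : {m : ℕ | ∃ f, IsFlow N y z f ∧ flowValue f y = (m : ℤ)}.Nonempty :=
    ⟨0, fun _ _ => 0, ⟨fun _ _ => Nat.zero_le _, fun _ _ _ => rfl⟩, by simp [flowValue]⟩
  have hseqs_ne : {m : ℕ | ∃ γ : List (List V), IsPathSeq N y z γ ∧ γ.length = m}.Nonempty :=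
    ⟨0, [], ⟨by simp, fun _ _ => by simp⟩, rfl⟩
  have hsub : {m : ℕ | ∃ γ : List (List V), IsPathSeq N y z γ ∧ γ.length = m} ⊆
      {m : ℕ | ∃ f, IsFlow N y z f ∧ flowValue f y = (m : ℤ)} := by
    rintro m ⟨γ, hγ, rfl⟩
    exact ⟨seqFlow γ, isFlow_seqFlow hγ, flowValue_seqFlow hyz hγ.1⟩
  obtain ⟨f, hf, hfv⟩ := Nat.sSup_mem hflows_ne bddAbove_flowValues
  obtain ⟨γ, hγ, hlen, hγf⟩ := exists_paths_le_of_isFlow hyz _ hf hfv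
  refine le_antisymm (csSup_le_csSup bddAbove_flowValues hseqs_ne hsub) ?_
  exact le_csSup (bddAbove_flowValues.mono hsub)
    ⟨γ, ⟨hγ, fun u v => (hγf u v).trans (hf.1 u v)⟩, hlen⟩

end PathSequences

end NetFlow

theorem maxFlow_ge_lambda_at_vertex_general {V : Type*} [Fintype V] [DecidableEq V]
    (N : Network V) (x y z : V) (hyz : y ≠ z)
    (f : V → V → ℕ) (hf : NetFlow.IsMaxFlow N y z f) :
    (NetFlow.lambdaX N y z {x} : ℤ) ≤ NetFlow.vertexFlow f y z x := by
  open NetFlow in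
  obtain ⟨γ, hγ, hlen, hγf⟩ := exists_paths_le_of_isFlow hyz _ hf.1 hf.2
  have hmax : γ ∈ MaxSeqs N y z :=
    ⟨⟨hγ, fun u v => (hγf u v).trans (hf.1.1 u v)⟩,
      hlen.trans (maxSeqLen_eq_maxFlowValue hyz).symm⟩
  have hlam : lambdaX N y z {x} ≤ lX {x} γ := Nat.sInf_le ⟨γ, hmax, rfl⟩
  rw [vertexFlow]
  split_ifs with hx
  · have hle : lX {x} γ ≤ γ.length := List.countP_le_length
    rw [hf.2]
    exact_mod_cast hlam.trans (hle.trans hlen.le)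
  · push Not at hx
    have hthrough : lX {x} γ = ∑ u, seqFlow γ x u := by
      rw [sum_seqFlow_out hγ, lX]
      exact List.countP_congr fun p _ => by simp [hx.2]
    have hle : ∑ u, seqFlow γ x u ≤ ∑ u, f x u := Finset.sum_le_sum fun u _ => hγf x u
    exact_mod_cast hlam.trans (hthrough.trans_le hle)

/-- for every maximum flow `f` from `y` to `z`, `f(x) ≥ λ^N_{yz}(x)`. -/
theorem maxFlow_ge_lambda_at_vertex {V : Type*} [Fintype V] [DecidableEq V]
    (hV : 2 ≤ Fintype.card V) (N : Network V) (x y z : V) (hyz : y ≠ z)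
    (f : V → V → ℕ) (hf : NetFlow.IsMaxFlow N y z f) :
    (NetFlow.lambdaX N y z {x} : ℤ) ≤ NetFlow.vertexFlow f y z x :=
  maxFlow_ge_lambda_at_vertex_general N x y z hyz f hf
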